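/- Each summand of a rooted insertion of rooted trees is a rooted tree: let V₁, V₂ be disjoint finite sets with * ∈ V₁, let (t₁, r₁) be a rooted tree on V₁ and (t₂, r₂) a rooted tree on V₂. With p the neighbour of * on the path from * to r₁ in t₁ (when * ≠ r₁), and C the set of neighbours of * in t₁ other than p (all neighbours of * when * = r₁), for every function f : C → V₂ the graph t' = (t₁ \ {*}) ∪ t₂ ∪ {{v, f(v)} : v ∈ C} ∪ ({{p, r₂}} if * ≠ r₁, else ∅) is a tree on (V₁ \ {*}) ∪ V₂. (This is the well-definedness of the rooted insertion underlying the theorem that rooted connected multigraphs with rooted insertion form an operad, restricted to trees.) -/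

import Mathlib

/-!
Common framework: a simple graph on a finite vertex set `V ⊆ α` is a finite set of
unordered pairs (`Sym2 α`) of distinct elements of `V`.  The insertion
`g₁ ∘_star g₂` is an element of the free `ℚ`-module `Finset (Sym2 α) →₀ ℚ`
on the set of edge sets.
-/

open scoped Classical

variable {α : Type*} [DecidableEq α]

/-- The finite edge set `g` is a simple graph on the vertex set `V`. -/
def IsGraphOn (V : Finset α) (g : Finset (Sym2 α)) : Prop :=
  ∀ e ∈ g, ¬ e.IsDiag ∧ ∀ v ∈ e, v ∈ V

/-- The two endpoints of an unordered pair, as a `Finset`. -/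
def sym2Finset : Sym2 α → Finset α :=
  Sym2.lift ⟨fun a b => {a, b}, by intro a b; simp [Finset.pair_comm]⟩

/-- Neighbours of `x` in the edge set `g`. -/
def nbrs (g : Finset (Sym2 α)) (x : α) : Finset α :=
  (g.biUnion sym2Finset).filter fun v => s(x, v) ∈ g

/-- Remove the vertex `x` (and all incident edges) from the edge set `g`. -/
def delG (g : Finset (Sym2 α)) (x : α) : Finset (Sym2 α) :=
  g.filter fun e => x ∉ e

/-- The edges `{v, f v}` obtained from a reconnection map `f : C → V₂`. -/
def newEdges (C V₂ : Finset α) (f : {v // v ∈ C} → {w // w ∈ V₂}) : Finset (Sym2 α) :=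
  Finset.univ.image fun v : {v // v ∈ C} => s(v.1, (f v).1)

/-- Insertion `g₁ ∘_star g₂` of a graph `g₂` on the vertex set `V₂` into a graph `g₁`:
the sum, over all maps `f` from the neighbours of `star` in `g₁` to `V₂`, of the graph
obtained by deleting `star` from `g₁`, adding `g₂`, and reconnecting along `f`. -/
noncomputable def ins (V₂ : Finset α) (star : α) (g₁ g₂ : Finset (Sym2 α)) :
    Finset (Sym2 α) →₀ ℚ :=
  ∑ f : ({v // v ∈ nbrs g₁ star} → {w // w ∈ V₂}),
    Finsupp.single (delG g₁ star ∪ g₂ ∪ newEdges (nbrs g₁ star) V₂ f) 1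

/-- Bilinear extension of the insertion to the free module on graphs. -/
noncomputable def insM (V₂ : Finset α) (star : α) (x y : Finset (Sym2 α) →₀ ℚ) :
    Finset (Sym2 α) →₀ ℚ :=
  x.sum fun g₁ c₁ => y.sum fun g₂ c₂ => (c₁ * c₂) • ins V₂ star g₁ g₂

/-- The simple graph associated with an edge set. -/
def toSG (g : Finset (Sym2 α)) : SimpleGraph α where
  Adj x y := x ≠ y ∧ s(x, y) ∈ g
  symm := by
    constructor
    intro x y h
    exact ⟨h.1.symm, by rw [Sym2.eq_swap]; exact h.2⟩
  loopless := by
    constructor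
    intro x h
    exact h.1 rfl

/-- The edge set `g` is connected on `V`: any two vertices of `V` are joined by a path. -/
def IsConnOn (V : Finset α) (g : Finset (Sym2 α)) : Prop :=
  ∀ x ∈ V, ∀ y ∈ V, (toSG g).Reachable x y

/-- A tree on `V`: a connected acyclic simple graph on `V`. -/
def IsTreeOn (V : Finset α) (g : Finset (Sym2 α)) : Prop :=
  IsGraphOn V g ∧ IsConnOn V g ∧ (toSG g).IsAcyclic

/-!
Deleting `star` splits `t₁` into branches, one through each neighbour `c` of `star`; the summand
consists of these branches and `t₂`, vertex-disjoint trees, together with exactly one new edge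
`{c, f c}` from each branch into `t₂`. Adding, one at a time, edges between components not yet
joined keeps the forest acyclic, and every vertex reaches `t₂` through the neighbour of its
branch. The rooted summand is the unrooted one for `f` extended by `p ↦ r₂`.
-/

namespace SimpleGraph

variable {V : Type*} {G H : SimpleGraph V}

theorem Walk.edges_subset_edgeSet_left_of_sup {u v : V} (w : (G ⊔ H).Walk u v)
    (hu : ∀ x, G.Reachable u x → x ∉ H.support) : ∀ e ∈ w.edges, e ∈ G.edgeSet := by
  induction w with
  | nil => simp
  | cons hadj q ih =>
    have hG := hadj.resolve_right fun h => hu _ .rfl h.mem_support_left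
    simp only [Walk.edges_cons, List.forall_mem_cons]
    exact ⟨hG, ih fun x hx => hu x (hG.reachable.trans hx)⟩

theorem Reachable.of_sup {u v : V} (h : (G ⊔ H).Reachable u v)
    (hu : ∀ x, G.Reachable u x → x ∉ H.support) : G.Reachable u v :=
  h.elim fun w => ⟨w.transfer G (w.edges_subset_edgeSet_left_of_sup hu)⟩

theorem IsAcyclic.sup_of_disjoint_support (hG : G.IsAcyclic) (hH : H.IsAcyclic)
    (hd : Disjoint G.support H.support) : (G ⊔ H).IsAcyclic := by
  have key : ∀ {G H : SimpleGraph V}, G.IsAcyclic → Disjoint G.support H.support →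
      ∀ {u : V} (c : (G ⊔ H).Walk u u), u ∈ G.support → ¬ c.IsCycle := by
    intro G H hG hd u c hu hc
    refine hG _ (hc.transfer (c.edges_subset_edgeSet_left_of_sup fun x hx => ?_))
    obtain rfl | hux := eq_or_ne u x
    · exact Set.disjoint_left.mp hd hu
    · exact Set.disjoint_left.mp hd (mem_support_of_reachable hux.symm hx.symm)
  intro u c hc
  rcases c.adj_snd hc.not_nil with hadj | hadj
  · exact key hG hd c hadj.mem_support_left hc
  · exact key hH hd.symm (c.mapLe (sup_comm G H).le) hadj.mem_support_left (hc.mapLe _)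

theorem IsAcyclic.sup_fromEdgeSet_range {ι : Type*} [Finite ι] (hG : G.IsAcyclic)
    (a b : ι → V) (ha : ∀ i j, G.Reachable (a i) (a j) → i = j)
    (hab : ∀ i j, ¬ G.Reachable (a i) (b j)) :
    (G ⊔ fromEdgeSet (Set.range fun i => s(a i, b i))).IsAcyclic := by
  classical
  have := Fintype.ofFinite ι
  suffices h : ∀ s : Finset ι, (G ⊔ fromEdgeSet ((fun i => s(a i, b i)) '' s)).IsAcyclic by
    simpa using h Finset.univ
  intro s
  induction s using Finset.induction_on with
  | empty => simpa using hG
  | @insert i s hi ih =>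
    have hnot : ¬ (G ⊔ fromEdgeSet ((fun i => s(a i, b i)) '' s)).Reachable (a i) (b i) := by
      refine fun h => hab i i (h.of_sup fun x hx hxs => ?_)
      obtain ⟨y, hy⟩ := hxs
      obtain ⟨⟨j, hj, hjxy⟩, -⟩ := (fromEdgeSet_adj _).mp hy
      rcases Sym2.eq_iff.mp hjxy with ⟨rfl, -⟩ | ⟨-, rfl⟩
      · exact hi (ha i j hx ▸ hj)
      · exact hab i j hx
    have : G ⊔ fromEdgeSet ((fun i => s(a i, b i)) '' ↑(insert i s)) =
        G ⊔ fromEdgeSet ((fun i => s(a i, b i)) '' s) ⊔ edge (a i) (b i) := by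
      rw [Finset.coe_insert, Set.image_insert_eq, Set.insert_eq, fromEdgeSet_union,
        sup_comm (fromEdgeSet _), ← sup_assoc]
      rfl
    rw [this]
    exact ih.sup_edge_of_not_reachable hnot

end SimpleGraph

open SimpleGraph

section EdgeSets

variable {β : Type*} {V W : Finset β} {g h : Finset (Sym2 β)} {v w : β}

theorem toSG_eq_fromEdgeSet (g : Finset (Sym2 β)) : toSG g = fromEdgeSet ↑g := by
  ext x y
  simp only [toSG, fromEdgeSet_adj, Finset.mem_coe]
  tauto

theorem toSG_mono (hgh : g ⊆ h) : toSG g ≤ toSG h :=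
  fun _ _ hxy => ⟨hxy.1, hgh hxy.2⟩

theorem IsGraphOn.mono (hg : IsGraphOn V g) (hVW : V ⊆ W) : IsGraphOn W g :=
  fun e he => ⟨(hg e he).1, fun v hv => hVW ((hg e he).2 v hv)⟩

theorem IsGraphOn.support_toSG_subset (hg : IsGraphOn V g) : (toSG g).support ⊆ V := by
  rintro v ⟨w, -, hvw⟩
  exact (hg _ hvw).2 v (Sym2.mem_mk_left v w)

theorem IsGraphOn.mem_of_reachable (hg : IsGraphOn V g) (hv : v ∈ V)
    (hvw : (toSG g).Reachable v w) : w ∈ V := by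
  obtain rfl | hne := eq_or_ne v w
  · exact hv
  · exact hg.support_toSG_subset (mem_support_of_reachable hne.symm hvw.symm)

end EdgeSets

section DeleteVertex

variable {V : Finset α} {g h : Finset (Sym2 α)} {x v w : α}

theorem mem_nbrs : v ∈ nbrs g x ↔ s(x, v) ∈ g := by
  refine ⟨fun hv => (Finset.mem_filter.mp hv).2, fun hv => Finset.mem_filter.mpr ⟨?_, hv⟩⟩
  exact Finset.mem_biUnion.mpr ⟨_, hv, by simp [sym2Finset]⟩

theorem mem_delG {e : Sym2 α} : e ∈ delG g x ↔ e ∈ g ∧ x ∉ e :=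
  Finset.mem_filter

theorem toSG_union (g h : Finset (Sym2 α)) : toSG (g ∪ h) = toSG g ⊔ toSG h := by
  rw [toSG_eq_fromEdgeSet, Finset.coe_union, fromEdgeSet_union, ← toSG_eq_fromEdgeSet,
    ← toSG_eq_fromEdgeSet]

theorem IsGraphOn.union (hg : IsGraphOn V g) (hh : IsGraphOn V h) : IsGraphOn V (g ∪ h) := by
  intro e he
  rcases Finset.mem_union.mp he with he | he
  exacts [hg e he, hh e he]

theorem IsGraphOn.delG (hg : IsGraphOn V g) : IsGraphOn (V.erase x) (delG g x) := by
  intro e he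
  obtain ⟨he, hxe⟩ := mem_delG.mp he
  exact ⟨(hg e he).1, fun v hv =>
    Finset.mem_erase.mpr ⟨fun hvx => hxe (hvx ▸ hv), (hg e he).2 v hv⟩⟩

theorem IsGraphOn.toSG_adj_of_mem_nbrs (hg : IsGraphOn V g) (hv : v ∈ nbrs g x) :
    (toSG g).Adj x v :=
  ⟨fun hxv => (hg _ (mem_nbrs.mp hv)).1 (Sym2.mk_isDiag_iff.mpr hxv), mem_nbrs.mp hv⟩

theorem IsGraphOn.mem_erase_of_mem_nbrs (hg : IsGraphOn V g) (hv : v ∈ nbrs g x) :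
    v ∈ V.erase x :=
  Finset.mem_erase.mpr ⟨(hg.toSG_adj_of_mem_nbrs hv).ne.symm,
    (hg _ (mem_nbrs.mp hv)).2 v (Sym2.mem_mk_right x v)⟩

theorem exists_mem_nbrs_reachable_delG (p : (toSG g).Walk v x) (hvx : v ≠ x) :
    ∃ c ∈ nbrs g x, (toSG (delG g x)).Reachable v c := by
  induction p with
  | nil => exact absurd rfl hvx
  | @cons v y x hadj q ih =>
    obtain rfl | hyx := eq_or_ne y x
    · exact ⟨v, mem_nbrs.mpr (Sym2.eq_swap ▸ hadj.2), .rfl⟩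
    · obtain ⟨c, hc, hyc⟩ := ih hyx
      have hvy : (toSG (delG g x)).Adj v y :=
        ⟨hadj.1, mem_delG.mpr ⟨hadj.2, by simp [Sym2.mem_iff, hvx.symm, hyx.symm]⟩⟩
      exact ⟨c, hc, hvy.reachable.trans hyc⟩

theorem not_reachable_delG_of_adj (hg : (toSG g).IsAcyclic) (hv : (toSG g).Adj x v)
    (hw : (toSG g).Adj x w) (hvw : v ≠ w) : ¬ (toSG (delG g x)).Reachable v w := by
  -- a `v`-`w` path avoiding `x` would close a cycle with the edges `xv` and `xw`
  intro hreach
  set H := toSG (delG g x) ⊔ edge x v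
  have hle : H ⊔ edge x w ≤ toSG g :=
    sup_le (sup_le (toSG_mono (Finset.filter_subset _ _)) ((edge_le_iff _).mpr (.inr hv)))
      ((edge_le_iff _).mpr (.inr hw))
  have hxw : H.Reachable x w :=
    (show H.Adj x v from .inr ((edge_adj ..).mpr ⟨.inl ⟨rfl, rfl⟩, hv.ne⟩)).reachable.trans
      (hreach.mono le_sup_left)
  rcases (isAcyclic_sup_fromEdgeSet_iff.mp (hg.anti hle)).2 hxw with hxw | hadj | hadj
  · exact hw.ne hxw
  · exact mem_delG.mp hadj.2 |>.2 (Sym2.mem_mk_left x w)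
  · exact hvw (((edge_adj ..).mp hadj).1.elim (fun h => h.2.symm) fun h => absurd h.1 hv.ne)

end DeleteVertex

section Insertion

variable {V₁ V₂ C : Finset α} {t₁ t₂ : Finset (Sym2 α)} {star : α}

theorem coe_newEdges (f : {v // v ∈ C} → {w // w ∈ V₂}) :
    (↑(newEdges C V₂ f) : Set (Sym2 α)) = Set.range fun v => s(v.1, (f v).1) := by
  simp [newEdges]

theorem isGraphOn_newEdges (hd : Disjoint V₁ V₂) (hC : C ⊆ V₁)
    (f : {v // v ∈ C} → {w // w ∈ V₂}) : IsGraphOn (V₁ ∪ V₂) (newEdges C V₂ f) := by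
  intro e he
  obtain ⟨v, -, rfl⟩ := Finset.mem_image.mp he
  refine ⟨fun hdiag => Finset.disjoint_left.mp hd (hC v.2) ?_, fun u hu => ?_⟩
  · exact Sym2.mk_isDiag_iff.mp hdiag ▸ (f v).2
  · rcases Sym2.mem_iff.mp hu with rfl | rfl
    exacts [Finset.mem_union_left _ (hC v.2), Finset.mem_union_right _ (f v).2]

variable (f : {v // v ∈ nbrs t₁ star} → {w // w ∈ V₂})

theorem isGraphOn_delG_union_newEdges (hg₁ : IsGraphOn V₁ t₁) (hg₂ : IsGraphOn V₂ t₂)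
    (hd : Disjoint V₁ V₂) :
    IsGraphOn (V₁.erase star ∪ V₂) (delG t₁ star ∪ t₂ ∪ newEdges (nbrs t₁ star) V₂ f) :=
  ((hg₁.delG.mono Finset.subset_union_left).union (hg₂.mono Finset.subset_union_right)).union
    (isGraphOn_newEdges (Finset.disjoint_of_subset_left (Finset.erase_subset _ _) hd)
      (fun _ => hg₁.mem_erase_of_mem_nbrs) f)

theorem isConnOn_delG_union_newEdges (hg₁ : IsGraphOn V₁ t₁) (hconn₁ : IsConnOn V₁ t₁)
    (hconn₂ : IsConnOn V₂ t₂) (hd : Disjoint V₁ V₂) (hstar : star ∈ V₁) :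
    IsConnOn (V₁.erase star ∪ V₂) (delG t₁ star ∪ t₂ ∪ newEdges (nbrs t₁ star) V₂ f) := by
  set F := delG t₁ star ∪ t₂ ∪ newEdges (nbrs t₁ star) V₂ f
  have hD : toSG (delG t₁ star) ≤ toSG F := toSG_mono (by intro e; simp +contextual [F])
  have ht₂ : toSG t₂ ≤ toSG F := toSG_mono (by intro e; simp +contextual [F])
  have hreach : ∀ x ∈ V₁.erase star ∪ V₂, ∃ z ∈ V₂, (toSG F).Reachable x z := by
    intro x hx
    rcases Finset.mem_union.mp hx with hx | hx
    · obtain ⟨hxs, hx⟩ := Finset.mem_erase.mp hx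
      obtain ⟨c, hc, hxc⟩ :=
        exists_mem_nbrs_reachable_delG (hconn₁ x hx star hstar).some hxs
      have hcf : (toSG F).Adj c (f ⟨c, hc⟩) := by
        refine ⟨fun h => Finset.disjoint_left.mp hd (Finset.mem_of_mem_erase
          (hg₁.mem_erase_of_mem_nbrs hc)) (h ▸ (f ⟨c, hc⟩).2), ?_⟩
        simp only [F, Finset.mem_union, newEdges, Finset.mem_image]
        exact .inr ⟨⟨c, hc⟩, Finset.mem_univ _, rfl⟩
      exact ⟨_, (f ⟨c, hc⟩).2, (hxc.mono hD).trans hcf.reachable⟩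
    · exact ⟨x, hx, .rfl⟩
  intro x hx y hy
  obtain ⟨z, hz, hxz⟩ := hreach x hx
  obtain ⟨z', hz', hyz'⟩ := hreach y hy
  exact hxz.trans (((hconn₂ z hz z' hz').mono ht₂).trans hyz'.symm)

theorem isAcyclic_delG_union_newEdges (hg₁ : IsGraphOn V₁ t₁) (hacyc₁ : (toSG t₁).IsAcyclic)
    (hg₂ : IsGraphOn V₂ t₂) (hacyc₂ : (toSG t₂).IsAcyclic) (hd : Disjoint V₁ V₂) :
    (toSG (delG t₁ star ∪ t₂ ∪ newEdges (nbrs t₁ star) V₂ f)).IsAcyclic := by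
  set D := toSG (delG t₁ star)
  have hW : Disjoint (V₁.erase star) V₂ :=
    Finset.disjoint_of_subset_left (Finset.erase_subset _ _) hd
  have hdisj : Disjoint D.support (toSG t₂).support :=
    (Finset.disjoint_coe.mpr hW).mono hg₁.delG.support_toSG_subset hg₂.support_toSG_subset
  have hG : (D ⊔ toSG t₂).IsAcyclic :=
    (hacyc₁.anti (toSG_mono (Finset.filter_subset _ _))).sup_of_disjoint_support hacyc₂ hdisj
  have hconf : ∀ c ∈ nbrs t₁ star, ∀ y, (D ⊔ toSG t₂).Reachable c y → D.Reachable c y :=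
    fun c hc y h => h.of_sup fun x hx hx₂ => Finset.disjoint_left.mp hW
      (hg₁.delG.mem_of_reachable (hg₁.mem_erase_of_mem_nbrs hc) hx) (hg₂.support_toSG_subset hx₂)
  rw [toSG_union, toSG_union, toSG_eq_fromEdgeSet (newEdges _ _ _), coe_newEdges]
  refine hG.sup_fromEdgeSet_range _ _ (fun c c' h => ?_) (fun c c' h => ?_)
  · by_contra hne
    exact not_reachable_delG_of_adj hacyc₁ (hg₁.toSG_adj_of_mem_nbrs c.2)
      (hg₁.toSG_adj_of_mem_nbrs c'.2) (Subtype.coe_ne_coe.mpr hne) (hconf c c.2 _ h)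
  · exact Finset.disjoint_left.mp hW
      (hg₁.delG.mem_of_reachable (hg₁.mem_erase_of_mem_nbrs c.2) (hconf c c.2 _ h)) (f c').2

theorem isTreeOn_delG_union_newEdges (ht₁ : IsTreeOn V₁ t₁) (ht₂ : IsTreeOn V₂ t₂)
    (hd : Disjoint V₁ V₂) (hstar : star ∈ V₁) :
    IsTreeOn (V₁.erase star ∪ V₂) (delG t₁ star ∪ t₂ ∪ newEdges (nbrs t₁ star) V₂ f) :=
  ⟨isGraphOn_delG_union_newEdges f ht₁.1 ht₂.1 hd,
    isConnOn_delG_union_newEdges f ht₁.1 ht₁.2.1 ht₂.2.1 hd hstar,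
    isAcyclic_delG_union_newEdges f ht₁.1 ht₁.2.2 ht₂.1 ht₂.2.2 hd⟩

end Insertion

theorem newEdges_extend {C N V₂ : Finset α} (hCN : C ⊆ N) (f : {v // v ∈ C} → {w // w ∈ V₂})
    {w : α} (hw : w ∈ V₂) :
    newEdges N V₂ (fun v => if h : v.1 ∈ C then f ⟨v.1, h⟩ else ⟨w, hw⟩) =
      newEdges C V₂ f ∪ (N \ C).image fun v => s(v, w) := by
  ext e
  simp only [newEdges, Finset.mem_union, Finset.mem_image, Finset.mem_univ, true_and,
    Finset.mem_sdiff, Subtype.exists]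
  constructor
  · rintro ⟨v, hv, rfl⟩
    by_cases hvC : v ∈ C
    · exact .inl ⟨v, hvC, by simp [hvC]⟩
    · exact .inr ⟨v, ⟨hv, hvC⟩, by simp [hvC]⟩
  · rintro (⟨v, hvC, rfl⟩ | ⟨v, ⟨hv, hvC⟩, rfl⟩)
    · exact ⟨v, hCN hvC, by simp [hvC]⟩
    · exact ⟨v, hv, by simp [hvC]⟩

theorem rooted_insertion_summand_is_tree_general
    (V₁ V₂ : Finset α) (star : α)
    (hd : Disjoint V₁ V₂) (hstar : star ∈ V₁)
    (t₁ t₂ : Finset (Sym2 α)) (r₁ r₂ : α) (hr₂ : r₂ ∈ V₂)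
    (ht₁ : IsTreeOn V₁ t₁) (ht₂ : IsTreeOn V₂ t₂)
    (p : α) (C : Finset α)
    (hp : star ≠ r₁ →
      p ∈ nbrs t₁ star ∧ (toSG (delG t₁ star)).Reachable p r₁ ∧
        C = (nbrs t₁ star).erase p)
    (hC : star = r₁ → C = nbrs t₁ star)
    (f : {v // v ∈ C} → {w // w ∈ V₂}) :
    IsTreeOn (V₁.erase star ∪ V₂)
      (delG t₁ star ∪ t₂ ∪ newEdges C V₂ f ∪
        (if star = r₁ then (∅ : Finset (Sym2 α)) else {s(p, r₂)})) := by
  have hCN : C ⊆ nbrs t₁ star := by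
    by_cases h : star = r₁
    · exact (hC h).le
    · exact (hp h).2.2 ▸ Finset.erase_subset _ _
  have hp_edge : (nbrs t₁ star \ C).image (fun v => s(v, r₂)) =
      if star = r₁ then ∅ else {s(p, r₂)} := by
    split_ifs with h
    · simp [hC h]
    · rw [(hp h).2.2, Finset.sdiff_erase_self (hp h).1, Finset.image_singleton]
  rw [Finset.union_assoc (delG t₁ star ∪ t₂), ← hp_edge, ← newEdges_extend hCN f hr₂]
  exact isTreeOn_delG_union_newEdges _ ht₁ ht₂ hd hstar

/-- **Each summand of a rooted insertion of rooted trees is a rooted tree**: with `p` the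
neighbour of `star` towards the root `r₁` (when `star ≠ r₁`) and `C` the remaining
neighbours of `star`, for every reconnection map `f : C → V₂` the resulting graph is a
tree on `(V₁ \ {star}) ∪ V₂`. -/
theorem rooted_insertion_summand_is_tree
    (V₁ V₂ : Finset α) (star : α)
    (hd : Disjoint V₁ V₂) (hstar : star ∈ V₁)
    (t₁ t₂ : Finset (Sym2 α)) (r₁ r₂ : α) (hr₁ : r₁ ∈ V₁) (hr₂ : r₂ ∈ V₂)
    (ht₁ : IsTreeOn V₁ t₁) (ht₂ : IsTreeOn V₂ t₂)
    (p : α) (C : Finset α)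
    (hp : star ≠ r₁ →
      p ∈ nbrs t₁ star ∧ (toSG (delG t₁ star)).Reachable p r₁ ∧
        C = (nbrs t₁ star).erase p)
    (hC : star = r₁ → C = nbrs t₁ star)
    (f : {v // v ∈ C} → {w // w ∈ V₂}) :
    IsTreeOn (V₁.erase star ∪ V₂)
      (delG t₁ star ∪ t₂ ∪ newEdges C V₂ f ∪
        (if star = r₁ then (∅ : Finset (Sym2 α)) else {s(p, r₂)})) :=
  rooted_insertion_summand_is_tree_general V₁ V₂ star hd hstar t₁ t₂ r₁ r₂ hr₂ ht₁ ht₂ p C hp hC f
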